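/- Let u : ℝ → ℝ be a C³ 2π-periodic mean-zero solution of βk²u''' + (λk² − λ⁻¹)u'' − αu' − λ sin(z+u) + (λ/2π)∫₀^{2π}sin(s+u(s))ds = 0 with α, β, k, λ > 0. Then ∫₀^{2π}sin(s+u(s))ds ≥ 0, with equality only if u ≡ 0. -/

import Mathlib

open Real MeasureTheory intervalIntegral Function Set

/-!
Multiplying the equation by `u'`, every term except `β k² u''² + α u'² - λ sin (z + u)` becomes
the derivative of a `2π`-periodic function, so integrating over a period gives
`λ ∫ sin (s + u s) = β k² ∫ u''² + α ∫ u'² ≥ 0`. If the left side vanishes then `∫ u'² = 0`,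
so `u` is constant, and a constant of mean zero is `0`.
-/

section IteratedDeriv

variable {𝕜 F : Type*} [NontriviallyNormedField 𝕜] [NormedAddCommGroup F] [NormedSpace 𝕜 F]
  {f : 𝕜 → F} {T : 𝕜}

theorem Function.Periodic.deriv (hf : Periodic f T) : Periodic (deriv f) T := fun x => by
  rw [← deriv_comp_add_const, show (fun y => f (y + T)) = f from funext hf]

theorem Function.Periodic.iteratedDeriv (hf : Periodic f T) (n : ℕ) :
    Periodic (iteratedDeriv n f) T := by
  induction n with
  | zero => simpa only [iteratedDeriv_zero] using hf
  | succ n ih => simpa only [iteratedDeriv_succ] using ih.deriv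

theorem ContDiff.hasDerivAt_iteratedDeriv {n : WithTop ℕ∞} (hf : ContDiff 𝕜 n f) {m : ℕ}
    (hm : m < n) (x : 𝕜) :
    HasDerivAt (iteratedDeriv m f) (iteratedDeriv (m + 1) f x) x := by
  rw [iteratedDeriv_succ]
  exact (hf.differentiable_iteratedDeriv m hm x).hasDerivAt

end IteratedDeriv

theorem Function.Periodic.integral_eq_zero_of_hasDerivAt {E : Type*} [NormedAddCommGroup E]
    [NormedSpace ℝ E] [CompleteSpace E] {f f' : ℝ → E} {T : ℝ} (hf : Periodic f T)
    (hderiv : ∀ x, HasDerivAt f (f' x) x) (hint : IntervalIntegrable f' volume 0 T) :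
    ∫ x in 0..T, f' x = 0 := by
  have hT : f T = f 0 := by simpa only [zero_add] using hf 0
  rw [integral_eq_sub_of_hasDerivAt (fun x _ => hderiv x) hint, hT, sub_self]

theorem Function.Periodic.eq_zero_of_integral_sq_eq_zero {g : ℝ → ℝ} {T : ℝ} (hT : 0 < T)
    (hg : Periodic g T) (hc : Continuous g) (h : ∫ x in 0..T, g x ^ 2 = 0) : g = 0 := by
  funext x
  obtain ⟨y, hy, hxy⟩ := hg.exists_mem_Ico₀ hT x
  rw [hxy, Pi.zero_apply]
  by_contra hne
  have hpos : 0 < ∫ x in 0..T, g x ^ 2 :=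
    integral_pos hT (by fun_prop) (fun _ _ => sq_nonneg _)
      ⟨y, Ico_subset_Icc_self hy, by positivity⟩
  exact hpos.ne' h

theorem eq_zero_of_deriv_eq_zero_of_integral_eq_zero {u : ℝ → ℝ} {T : ℝ} (hT : T ≠ 0)
    (hd : Differentiable ℝ u) (hu' : deriv u = 0) (h : ∫ x in 0..T, u x = 0) : u = 0 := by
  have hconst : ∀ x, u x = u 0 := fun x => is_const_of_deriv_eq_zero hd (congrFun hu') x 0
  rw [integral_congr (fun x _ => hconst x), intervalIntegral.integral_const, sub_zero, smul_eq_mul,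
    mul_eq_zero] at h
  exact funext fun x => (hconst x).trans (h.resolve_left hT)

section Energy

variable {α b c d lam : ℝ} {u : ℝ → ℝ}

theorem hasDerivAt_energy (hu : ContDiff ℝ 3 u)
    (hODE : ∀ z, b * iteratedDeriv 3 u z + c * iteratedDeriv 2 u z - α * deriv u z
      - lam * sin (z + u z) + d = 0) (x : ℝ) :
    HasDerivAt
      (fun z => b * (deriv u z * iteratedDeriv 2 u z) + c * deriv u z ^ 2 / 2
        + lam * cos (z + u z) + d * u z)
      (b * iteratedDeriv 2 u x ^ 2 + α * deriv u x ^ 2 - lam * sin (x + u x)) x := by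
  have h0 : HasDerivAt u (deriv u x) x := (hu.differentiable (by norm_num) x).hasDerivAt
  have h1 : HasDerivAt (deriv u) (iteratedDeriv 2 u x) x := by
    simpa only [iteratedDeriv_one] using hu.hasDerivAt_iteratedDeriv (m := 1) (by norm_num) x
  have h2 : HasDerivAt (iteratedDeriv 2 u) (iteratedDeriv 3 u x) x :=
    hu.hasDerivAt_iteratedDeriv (by norm_num) x
  refine (((((h1.mul h2).const_mul b).add ((h1.pow 2).const_mul c |>.div_const 2)).add
    (((hasDerivAt_id' x).add h0).cos.const_mul lam)).add (h0.const_mul d)).congr_deriv ?_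
  simp only [Pi.add_apply]
  linear_combination deriv u x * hODE x

theorem energy_identity (hu : ContDiff ℝ 3 u) (hper : Periodic u (2 * π))
    (hODE : ∀ z, b * iteratedDeriv 3 u z + c * iteratedDeriv 2 u z - α * deriv u z
      - lam * sin (z + u z) + d = 0) :
    lam * ∫ s in 0..2 * π, sin (s + u s)
      = b * (∫ s in 0..2 * π, iteratedDeriv 2 u s ^ 2) + α * ∫ s in 0..2 * π, deriv u s ^ 2 := by
  have := hu.continuous
  have := hu.continuous_deriv (by norm_num)
  have := hu.continuous_iteratedDeriv 2 (by norm_num)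
  have h : ∫ z in 0..2 * π,
      (b * iteratedDeriv 2 u z ^ 2 + α * deriv u z ^ 2 - lam * sin (z + u z)) = 0 := by
    refine Periodic.integral_eq_zero_of_hasDerivAt (fun z => ?_) (hasDerivAt_energy hu hODE)
      (Continuous.intervalIntegrable (by fun_prop) _ _)
    simp only [hper.deriv z, hper.iteratedDeriv 2 z, hper z, add_right_comm z (2 * π),
      cos_add_two_pi]
  rw [integral_sub (Continuous.intervalIntegrable (by fun_prop) _ _)
      (Continuous.intervalIntegrable (by fun_prop) _ _),
    integral_add (Continuous.intervalIntegrable (by fun_prop) _ _)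
      (Continuous.intervalIntegrable (by fun_prop) _ _),
    intervalIntegral.integral_const_mul, intervalIntegral.integral_const_mul,
    intervalIntegral.integral_const_mul] at h
  linarith

end Energy

theorem mean_sin_nonneg_general
    (α β k lam : ℝ) (hα : 0 < α) (hβ : 0 < β) (hlam : 0 < lam)
    (u : ℝ → ℝ) (hu : ContDiff ℝ 3 u)
    (hper : ∀ z, u (z + 2*π) = u z)
    (hmean : ∫ s in (0:ℝ)..(2*π), u s = 0)
    (hODE : ∀ z, β * k^2 * iteratedDeriv 3 u z
        + (lam * k^2 - lam⁻¹) * iteratedDeriv 2 u z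
        - α * deriv u z - lam * Real.sin (z + u z)
        + (lam / (2*π)) * ∫ s in (0:ℝ)..(2*π), Real.sin (s + u s) = 0) :
    0 ≤ ∫ s in (0:ℝ)..(2*π), Real.sin (s + u s)
    ∧ ((∫ s in (0:ℝ)..(2*π), Real.sin (s + u s)) = 0 → ∀ z, u z = 0) := by
  have hE := energy_identity hu hper hODE
  have hb : 0 ≤ β * k ^ 2 * ∫ s in 0..2 * π, iteratedDeriv 2 u s ^ 2 :=
    mul_nonneg (by positivity) (integral_nonneg two_pi_pos.le fun _ _ => sq_nonneg _)
  have ha : 0 ≤ α * ∫ s in 0..2 * π, deriv u s ^ 2 :=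
    mul_nonneg hα.le (integral_nonneg two_pi_pos.le fun _ _ => sq_nonneg _)
  refine ⟨(mul_nonneg_iff_of_pos_left hlam).mp (hE ▸ add_nonneg hb ha), fun hM => ?_⟩
  have hu'sq : ∫ s in 0..2 * π, deriv u s ^ 2 = 0 := by
    rw [hM, mul_zero] at hE
    exact (mul_eq_zero.mp (by linarith)).resolve_left hα.ne'
  have hu' : deriv u = 0 :=
    Periodic.eq_zero_of_integral_sq_eq_zero two_pi_pos (Periodic.deriv hper)
      (hu.continuous_deriv (by norm_num)) hu'sq
  exact congrFun (eq_zero_of_deriv_eq_zero_of_integral_eq_zero two_pi_pos.ne'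
    (hu.differentiable (by norm_num)) hu' hmean)

/-- Positivity of the mean of `sin(s+u(s))` for solutions of the rescaled
equation: `∫₀^{2π} sin(s+u(s)) ds ≥ 0`, with equality only if `u ≡ 0`. -/
theorem mean_sin_nonneg
    (α β k lam : ℝ) (hα : 0 < α) (hβ : 0 < β) (hk : 0 < k) (hlam : 0 < lam)
    (u : ℝ → ℝ) (hu : ContDiff ℝ 3 u)
    (hper : ∀ z, u (z + 2*π) = u z)
    (hmean : ∫ s in (0:ℝ)..(2*π), u s = 0)
    (hODE : ∀ z, β * k^2 * iteratedDeriv 3 u z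
        + (lam * k^2 - lam⁻¹) * iteratedDeriv 2 u z
        - α * deriv u z - lam * Real.sin (z + u z)
        + (lam / (2*π)) * ∫ s in (0:ℝ)..(2*π), Real.sin (s + u s) = 0) :
    0 ≤ ∫ s in (0:ℝ)..(2*π), Real.sin (s + u s)
    ∧ ((∫ s in (0:ℝ)..(2*π), Real.sin (s + u s)) = 0 → ∀ z, u z = 0) :=
  mean_sin_nonneg_general α β k lam hα hβ hlam u hu hper hmean hODE
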